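/- arXiv:2507.11080 — 5 statements merged into one kernel-verified Lean document; each statement's English description precedes it below -/
import Mathlib

section
/- Let H be a hypergraph and F a reduced elimination forest of H. Then for every vertex u of H, the subhypergraph of H induced by the set of descendants of u in F (including u) is connected. Moreover, for every non-leaf vertex u and every child v of u in F, the subhypergraph induced by the descendants of v together with u is connected. -/
/-- A hypergraph on vertex type `V`: a set of nonempty hyperedges. -/
structure SetHypergraph (V : Type*) where
  E : Set (Set V)
  edge_nonempty : ∀ e ∈ E, e.Nonempty

/-- Two vertices are adjacent if they are distinct and share a hyperedge. -/
def SetHypergraph.adj {V : Type*} (H : SetHypergraph V) (u v : V) : Prop :=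
  u ≠ v ∧ ∃ e ∈ H.E, u ∈ e ∧ v ∈ e

/-- A rooted forest on `V`, given by parent pointers, with no infinite ancestor chains. -/
structure RootedForest (V : Type*) where
  parent : V → Option V
  wf : WellFounded fun a b => parent b = some a

/-- `F.anc a b` : `a` is an ancestor of `b` (every vertex is an ancestor of itself). -/
def RootedForest.anc {V : Type*} (F : RootedForest V) (a b : V) : Prop :=
  Relation.ReflTransGen (fun x y => F.parent x = some y) b a

/-- The set of descendants of `x` (including `x` itself). -/
def RootedForest.desc {V : Type*} (F : RootedForest V) (x : V) : Set V :=
  {v | F.anc x v}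

/-- `F` is an elimination forest of `H`: any two adjacent vertices are in
ancestor–descendant relation. -/
def IsEliminationForest {V : Type*} (H : SetHypergraph V) (F : RootedForest V) : Prop :=
  ∀ u v, H.adj u v → F.anc u v ∨ F.anc v u

/-- `F` is reduced: every non-leaf vertex `u` is adjacent in `H` to the subtree
rooted at each of its children. -/
def IsReducedForest {V : Type*} (H : SetHypergraph V) (F : RootedForest V) : Prop :=
  ∀ u v, F.parent v = some u → ∃ w ∈ F.desc v, H.adj u w

/-- The subhypergraph of `H` induced by `S` is connected. -/
def HConnectedOn {V : Type*} (H : SetHypergraph V) (S : Set V) : Prop :=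
  ∀ a ∈ S, ∀ b ∈ S,
    Relation.ReflTransGen (fun x y => x ∈ S ∧ y ∈ S ∧ H.adj x y) a b

/-!
Every vertex of a subtree is joined to the root of the subtree inside it: a vertex `a` below `u`
lies in the subtree of some child `c` of `u`, which is connected by induction, and reducedness
gives an edge from `u` into that subtree. The induction runs from the leaves upwards, which is
well founded because the forest is finite.
-/

section

variable {V : Type*}

namespace SetHypergraph

variable (H : SetHypergraph V)

theorem adj_symm {u v : V} (h : H.adj u v) : H.adj v u :=
  let ⟨hne, e, he, hu, hv⟩ := h
  ⟨hne.symm, e, he, hv, hu⟩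

def ReachIn (S : Set V) : V → V → Prop :=
  Relation.ReflTransGen fun x y => x ∈ S ∧ y ∈ S ∧ H.adj x y

variable {H}

theorem ReachIn.mono {S T : Set V} (hST : S ⊆ T) {a b : V} (h : H.ReachIn S a b) :
    H.ReachIn T a b :=
  Relation.ReflTransGen.mono (fun _ _ ⟨hx, hy, hxy⟩ => ⟨hST hx, hST hy, hxy⟩) _ _ h

theorem ReachIn.symm {S : Set V} {a b : V} (h : H.ReachIn S a b) : H.ReachIn S b a := by
  induction h with
  | refl => exact .refl
  | tail _ hstep ih => exact .head ⟨hstep.2.1, hstep.1, H.adj_symm hstep.2.2⟩ ih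

theorem hConnectedOn_of_reachIn {S : Set V} (r : V) (h : ∀ a ∈ S, H.ReachIn S r a) :
    HConnectedOn H S :=
  fun a ha b hb => (h a ha).symm.trans (h b hb)

end SetHypergraph

namespace RootedForest

variable (F : RootedForest V)

theorem mem_desc_self (u : V) : u ∈ F.desc u :=
  Relation.ReflTransGen.refl

variable {F}

theorem desc_subset_of_parent {u v : V} (h : F.parent v = some u) : F.desc v ⊆ F.desc u :=
  fun _ hw => Relation.ReflTransGen.tail hw h

theorem mem_desc_iff_eq_or_mem_desc_child {u a : V} :
    a ∈ F.desc u ↔ a = u ∨ ∃ c, F.parent c = some u ∧ a ∈ F.desc c := by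
  refine ⟨fun ha => ?_, ?_⟩
  · rcases Relation.ReflTransGen.cases_tail ha with rfl | ⟨c, hac, hcu⟩
    exacts [.inl rfl, .inr ⟨c, hcu, hac⟩]
  · rintro (rfl | ⟨c, hcu, hac⟩)
    exacts [F.mem_desc_self a, desc_subset_of_parent hcu hac]

variable (F)

theorem wellFounded_child [Finite V] : WellFounded fun a b => F.parent a = some b := by
  let child : V → V → Prop := fun a b => F.parent a = some b
  have : Std.Irrefl (Relation.TransGen child) :=
    ⟨fun a h => F.wf.transGen.irrefl.irrefl a (Relation.transGen_swap.mp h)⟩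
  exact Subrelation.wf (r := Relation.TransGen child) (Relation.TransGen.single ·)
    (Finite.wellFounded_of_trans_of_irrefl _)

end RootedForest

open SetHypergraph RootedForest

variable {H : SetHypergraph V} {F : RootedForest V}

theorem hConnectedOn_insert_desc_of_parent (hred : IsReducedForest H F) {u v : V}
    (hpar : F.parent v = some u) (hconn : HConnectedOn H (F.desc v)) :
    HConnectedOn H (insert u (F.desc v)) := by
  obtain ⟨w, hw, huw⟩ := hred u v hpar
  refine hConnectedOn_of_reachIn u fun a ha => ?_
  rcases ha with rfl | ha
  · exact .refl
  · exact Relation.ReflTransGen.head ⟨Set.mem_insert _ _, Set.mem_insert_of_mem _ hw, huw⟩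
      (ReachIn.mono (Set.subset_insert _ _) (hconn w hw a ha))

theorem hConnectedOn_desc [Finite V] (hred : IsReducedForest H F) (u : V) :
    HConnectedOn H (F.desc u) := by
  induction u using F.wellFounded_child.induction with
  | _ u ih =>
    refine hConnectedOn_of_reachIn u fun a ha => ?_
    rcases mem_desc_iff_eq_or_mem_desc_child.mp ha with rfl | ⟨c, hcu, hac⟩
    · exact .refl
    · have hsub : insert u (F.desc c) ⊆ F.desc u :=
        Set.insert_subset (F.mem_desc_self u) (desc_subset_of_parent hcu)
      exact ReachIn.mono hsub (hConnectedOn_insert_desc_of_parent hred hcu (ih c hcu)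
        u (Set.mem_insert _ _) a (Set.mem_insert_of_mem _ hac))

end

theorem stmt_2_general {V : Type*} [Fintype V] (H : SetHypergraph V) (F : RootedForest V)
    (hred : IsReducedForest H F) :
    (∀ u : V, HConnectedOn H (F.desc u)) ∧
    (∀ u v : V, F.parent v = some u → HConnectedOn H (insert u (F.desc v))) :=
  ⟨hConnectedOn_desc hred, fun _ v hpar =>
    hConnectedOn_insert_desc_of_parent hred hpar (hConnectedOn_desc hred v)⟩

/-- In a reduced elimination forest, every subtree induces a connected subhypergraph,
and for every non-leaf `u` with child `v`, the descendants of `v` together with `u`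
induce a connected subhypergraph. -/
theorem stmt_2 {V : Type*} [Fintype V] (H : SetHypergraph V) (F : RootedForest V)
    (hEF : IsEliminationForest H F) (hred : IsReducedForest H F) :
    (∀ u : V, HConnectedOn H (F.desc u)) ∧
    (∀ u v : V, F.parent v = some u → HConnectedOn H (insert u (F.desc v))) :=
  stmt_2_general H F hred
end

section
/- Let X_1, ..., X_q be a sequence of finite sets, each of size at most p. Call index i a peak if i = q, or i < q and X_i \ X_{i+1} ≠ ∅. Suppose all sets indexed by peaks are pairwise distinct and there are at most m distinct peak sets possible. Partition [q] into maximal intervals on which the sequence is ⊆-increasing (i.e., X_{b_1} ⊆ X_{b_2} whenever b_1 < b_2 are in the same interval); each such interval ends at a peak. Then q ≤ p·m. -/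
/-!
Follow the sequence from any index `i` to the first peak `k ≥ i`. Between `i` and `k` there
is no peak, so the sequence is `⊆`-increasing there, and strictly so because consecutive sets
differ; the cardinalities therefore climb from at least `1` to at most `p`, whence `k - i < p`.
So every index lies among the `p` indices ending at some peak, and since peak sets are
pairwise distinct members of `S`, there are at most `m` peaks.
-/

open Finset

theorem Nat.le_mul_card_of_forall_exists_mem_Ico {q p : ℕ} (s : Finset ℕ)
    (h : ∀ i ∈ Icc 1 q, ∃ k ∈ s, k ∈ Ico i (i + p)) : q ≤ p * s.card := by
  have hcover : Icc 1 q ⊆ s.biUnion fun k => Ioc (k - p) k := by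
    intro i hi
    obtain ⟨k, hks, hk⟩ := h i hi
    simp only [mem_Icc, mem_Ico] at hi hk
    exact mem_biUnion.2 ⟨k, hks, mem_Ioc.2 ⟨by omega, hk.1⟩⟩
  calc q = #(Icc 1 q) := by simp
    _ ≤ #(s.biUnion fun k => Ioc (k - p) k) := card_le_card hcover
    _ ≤ #s * p := card_biUnion_le_card_mul _ _ _ fun k _ => by simp only [Nat.card_Ioc]; omega
    _ = p * #s := Nat.mul_comm _ _

theorem Finset.card_add_le_card_of_ssubset_succ {α : Type*} {X : ℕ → Finset α} {i j : ℕ}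
    (hij : i ≤ j) (h : ∀ k, i ≤ k → k < j → X k ⊂ X (k + 1)) : #(X i) + (j - i) ≤ #(X j) := by
  induction j, hij using Nat.le_induction with
  | base => simp
  | succ j hij ih =>
    have hlt := card_lt_card (h j hij j.lt_succ_self)
    have := ih fun k hik hkj => h k hik (by omega)
    omega

section Peaks

variable {α : Type*} [DecidableEq α]

def IsPeak (X : ℕ → Finset α) (q i : ℕ) : Prop :=
  i = q ∨ (X i \ X (i + 1)).Nonempty

instance (X : ℕ → Finset α) (q i : ℕ) : Decidable (IsPeak X q i) := by
  unfold IsPeak; infer_instance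

theorem exists_isPeak_forall_subset_succ (X : ℕ → Finset α) {q i : ℕ} (hiq : i ≤ q) :
    ∃ k, i ≤ k ∧ k ≤ q ∧ IsPeak X q k ∧ ∀ l, i ≤ l → l < k → X l ⊆ X (l + 1) := by
  have hex : ∃ k, i ≤ k ∧ k ≤ q ∧ IsPeak X q k := ⟨q, hiq, le_rfl, Or.inl rfl⟩
  obtain ⟨hik, hkq, hpeak⟩ := Nat.find_spec hex
  refine ⟨Nat.find hex, hik, hkq, hpeak, fun l hil hlk => ?_⟩
  have hnot : ¬IsPeak X q l := fun hl => Nat.find_min hex hlk ⟨hil, by omega, hl⟩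
  simp only [IsPeak, not_or, not_nonempty_iff_eq_empty, sdiff_eq_empty_iff_subset] at hnot
  exact hnot.2

theorem exists_isPeak_mem_Ico {X : ℕ → Finset α} {q p i : ℕ} (hi : i ∈ Icc 1 q)
    (hne : (X i).Nonempty) (hcard : ∀ k, 1 ≤ k → k ≤ q → #(X k) ≤ p)
    (hconsec : ∀ k, 1 ≤ k → k + 1 ≤ q → X k ≠ X (k + 1)) :
    ∃ k ∈ (Icc 1 q).filter (IsPeak X q), k ∈ Ico i (i + p) := by
  rw [mem_Icc] at hi
  obtain ⟨k, hik, hkq, hpeak, hsub⟩ := exists_isPeak_forall_subset_succ X hi.2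
  have hchain : #(X i) + (k - i) ≤ #(X k) :=
    card_add_le_card_of_ssubset_succ hik fun l hil hlk =>
      (hsub l hil hlk).ssubset_of_ne (hconsec l (by omega) (by omega))
  have := hne.card_pos
  have := hcard k (by omega) hkq
  exact ⟨k, mem_filter.2 ⟨mem_Icc.2 ⟨by omega, hkq⟩, hpeak⟩, mem_Ico.2 ⟨hik, by omega⟩⟩

theorem card_filter_isPeak_le {X : ℕ → Finset α} {q : ℕ} {S : Finset (Finset α)}
    (hpeak : ∀ i j, 1 ≤ i → i ≤ q → 1 ≤ j → j ≤ q → IsPeak X q i → IsPeak X q j → i ≠ j →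
      X i ≠ X j)
    (hSmem : ∀ i, 1 ≤ i → i ≤ q → IsPeak X q i → X i ∈ S) :
    #((Icc 1 q).filter (IsPeak X q)) ≤ #S := by
  refine card_le_card_of_injOn X (fun i hi => ?_) fun i hi j hj hij => ?_
  · simp only [coe_filter, mem_Icc, Set.mem_ofPred_eq] at hi
    exact hSmem i hi.1.1 hi.1.2 hi.2
  · simp only [coe_filter, mem_Icc, Set.mem_ofPred_eq] at hi hj
    by_contra hne
    exact hpeak i j hi.1.1 hi.1.2 hj.1.1 hj.1.2 hi.2 hj.2 hne hij

end Peaks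

/-- Peaks bound the number of `X`-intervals. `X 1, …, X q` is a sequence of nonempty
finite sets of size at most `p`, with consecutive sets distinct. An index `i` is a peak
if `i = q` or `X i \ X (i+1) ≠ ∅`. If the sets indexed by peaks are pairwise distinct
and all of them lie in a family `S` of at most `m` possible sets, then `q ≤ p·m`. -/
theorem stmt_7 {α : Type*} [DecidableEq α] (q p m : ℕ) (X : ℕ → Finset α)
    (hne : ∀ i, 1 ≤ i → i ≤ q → (X i).Nonempty)
    (hcard : ∀ i, 1 ≤ i → i ≤ q → (X i).card ≤ p)
    (hconsec : ∀ i, 1 ≤ i → i + 1 ≤ q → X i ≠ X (i + 1))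
    (hpeak : ∀ i j, 1 ≤ i → i ≤ q → 1 ≤ j → j ≤ q →
      (i = q ∨ (X i \ X (i + 1)).Nonempty) →
      (j = q ∨ (X j \ X (j + 1)).Nonempty) → i ≠ j → X i ≠ X j)
    (S : Finset (Finset α)) (hSm : S.card ≤ m)
    (hSmem : ∀ i, 1 ≤ i → i ≤ q → (i = q ∨ (X i \ X (i + 1)).Nonempty) → X i ∈ S) :
    q ≤ p * m := by
  calc q ≤ p * #((Icc 1 q).filter (IsPeak X q)) :=
        Nat.le_mul_card_of_forall_exists_mem_Ico _ fun i hi =>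
          exists_isPeak_mem_Ico hi (hne i (mem_Icc.1 hi).1 (mem_Icc.1 hi).2) hcard hconsec
    _ ≤ p * m := Nat.mul_le_mul_left p ((card_filter_isPeak_le hpeak hSmem).trans hSm)
end

section
/- Every intersection graph of (vertex sets of) subtrees of a forest is chordal. -/
/-!
Suppose `T₀, …, Tₙ₋₁` (`n ≥ 4`) form an induced cycle. Then `T₀`, `T₁` and
`B = T₂ ∪ ⋯ ∪ Tₙ₋₁` are subtrees (`B` is a chain of consecutively intersecting subtrees) that
meet pairwise, yet `T₀ ∩ T₁ ∩ B = ∅` because `T₀ ∩ T₂ = ∅` and `T₁ ∩ Tₖ = ∅` for `k ≥ 3`.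
This contradicts the Helly property of subtrees of a forest. For the latter, recall that the
unique path between two vertices of a subtree stays inside it. The path inside `r` from
`r ∩ s` to `t ∩ r` therefore lies in the subtree `s ∪ t`; if it avoids `s ∩ t` it must step
along an edge from `s \ t` to `t \ s`, and that edge closes a cycle through `s ∩ t`.
-/

open Fin.NatCast SimpleGraph

namespace SimpleGraph

variable {V : Type*} {G : SimpleGraph V} {s t r : Set V} {a b : V}

theorem Preconnected.exists_isPath_support_subset (hs : (G.induce s).Preconnected)
    (ha : a ∈ s) (hb : b ∈ s) : ∃ p : G.Walk a b, p.IsPath ∧ ∀ v ∈ p.support, v ∈ s := by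
  classical
  obtain ⟨q⟩ := hs ⟨a, ha⟩ ⟨b, hb⟩
  let p := q.map (Embedding.induce s).toHom
  refine ⟨p.bypass, p.bypass_isPath, fun v hv => ?_⟩
  have hvq := p.support_bypass_subset_support hv
  rw [Walk.support_map] at hvq
  obtain ⟨⟨w, hw⟩, -, rfl⟩ := List.mem_map.mp hvq
  exact hw

theorem induce_biUnion_le_preconnected {f : ℕ → Set V} {k : ℕ}
    (hf : ∀ i ≤ k, (G.induce (f i)).Preconnected)
    (hchain : ∀ i < k, (f i ∩ f (i + 1)).Nonempty) :
    (G.induce (⋃ i ≤ k, f i)).Preconnected := by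
  induction k with
  | zero =>
    rw [show ⋃ i ≤ 0, f i = f 0 by simp]
    exact hf 0 le_rfl
  | succ k ih =>
    rw [Set.biUnion_le_succ]
    have hk := ih (fun i hi => hf i (by omega)) (fun i hi => hchain i (by omega))
    obtain ⟨x, hxk, hxk'⟩ := hchain k (by omega)
    exact (induce_union_connected hk (hf (k + 1) le_rfl)
      ⟨x, Set.mem_iUnion₂.mpr ⟨k, le_rfl, hxk⟩, hxk'⟩).preconnected

namespace IsAcyclic

theorem support_subset_of_isPath (hG : G.IsAcyclic) (hs : (G.induce s).Preconnected)
    {p : G.Walk a b} (hp : p.IsPath) (ha : a ∈ s) (hb : b ∈ s) : ∀ v ∈ p.support, v ∈ s := by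
  obtain ⟨q, hq, hqs⟩ := hs.exists_isPath_support_subset ha hb
  obtain rfl : p = q := congrArg Subtype.val <| (hG.subsingleton_path a b).elim ⟨p, hp⟩ ⟨q, hq⟩
  exact hqs

theorem not_adj_of_mem_diff (hG : G.IsAcyclic) (hs : (G.induce s).Preconnected)
    (ht : (G.induce t).Preconnected) (hst : (s ∩ t).Nonempty) {u w : V} (hu : u ∈ s \ t)
    (hw : w ∈ t \ s) : ¬G.Adj u w := by
  intro huw
  obtain ⟨y, hys, hyt⟩ := hst
  obtain ⟨p, hp, hps⟩ := hs.exists_isPath_support_subset hys hu.1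
  obtain ⟨q, hq, hqt⟩ := ht.exists_isPath_support_subset hyt hw.1
  exact hw.2 <| hps w <|
    hG.mem_support_of_ne_mem_support_of_adj_of_isPath hp hq huw fun h => hu.2 (hqt u h)

theorem inter_inter_nonempty (hG : G.IsAcyclic) (hs : (G.induce s).Preconnected)
    (ht : (G.induce t).Preconnected) (hr : (G.induce r).Preconnected) (hst : (s ∩ t).Nonempty)
    (htr : (t ∩ r).Nonempty) (hrs : (r ∩ s).Nonempty) : (s ∩ t ∩ r).Nonempty := by
  by_contra hempty
  obtain ⟨a, har, has⟩ := hrs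
  obtain ⟨b, hbt, hbr⟩ := htr
  obtain ⟨p, hp, hpr⟩ := hr.exists_isPath_support_subset har hbr
  have hpst := hG.support_subset_of_isPath (induce_union_connected hs ht hst).preconnected hp
    (Or.inl has) (Or.inr hbt)
  have hbs : b ∉ s := fun h => hempty ⟨b, ⟨h, hbt⟩, hbr⟩
  obtain ⟨d, hd, hds, hdns⟩ := p.exists_boundary_dart s has hbs
  have hfst := p.dart_fst_mem_support_of_mem_darts hd
  have hsnd := p.dart_snd_mem_support_of_mem_darts hd
  exact hG.not_adj_of_mem_diff hs ht hst ⟨hds, fun h => hempty ⟨_, ⟨hds, h⟩, hpr _ hfst⟩⟩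
    ⟨(hpst _ hsnd).resolve_left hdns, hdns⟩ d.adj

end IsAcyclic

theorem cycleGraph_adj_natCast_succ {n : ℕ} [NeZero n] (hn : 2 ≤ n) (k : ℕ) :
    (cycleGraph n).Adj (k : Fin n) (k + 1 : ℕ) := by
  obtain ⟨m, rfl⟩ := Nat.exists_eq_add_of_le' hn
  exact Or.inr (by rw [Nat.cast_succ, add_sub_cancel_left])

theorem cycleGraph_not_adj_natCast {n i j : ℕ} [NeZero n] (hij : i + 2 ≤ j) (hj : j < n)
    (hji : j + 2 ≤ n + i) : ¬(cycleGraph n).Adj (i : Fin n) j := by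
  have hi : i < n := by omega
  have hlt : (i : Fin n) < j := by
    rw [Fin.lt_def, Fin.val_cast_of_lt hi, Fin.val_cast_of_lt hj]
    omega
  rw [cycleGraph_adj', Fin.coe_sub_iff_lt.mpr hlt, Fin.coe_sub_iff_le.mpr hlt.le,
    Fin.val_cast_of_lt hi, Fin.val_cast_of_lt hj]
  omega

section IntersectionGraph

variable {ι : Type*} {S : ι → Set V}

theorem fromRel_inter_nonempty_adj {i j : ι} :
    (fromRel fun i j => (S i ∩ S j).Nonempty).Adj i j ↔ i ≠ j ∧ (S i ∩ S j).Nonempty := by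
  rw [fromRel_adj, Set.inter_comm (S j), or_self]

variable {n : ℕ} [NeZero n] (e : cycleGraph n ↪g fromRel fun i j => (S i ∩ S j).Nonempty)

theorem inter_succ_nonempty_of_cycleGraph_embedding (hn : 2 ≤ n) (k : ℕ) :
    (S (e k) ∩ S (e (k + 1 : ℕ))).Nonempty :=
  (fromRel_inter_nonempty_adj.mp (e.map_adj_iff.mpr (cycleGraph_adj_natCast_succ hn k))).2

theorem disjoint_of_cycleGraph_embedding {i j : ℕ} (hij : i + 2 ≤ j) (hj : j < n)
    (hji : j + 2 ≤ n + i) : Disjoint (S (e i)) (S (e j)) := by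
  have hne : e i ≠ e j := e.injective.ne fun h => by
    have := congrArg Fin.val h
    rw [Fin.val_cast_of_lt (by omega), Fin.val_cast_of_lt hj] at this
    omega
  rw [Set.disjoint_iff_inter_eq_empty, ← Set.not_nonempty_iff_eq_empty]
  exact fun h => cycleGraph_not_adj_natCast hij hj hji
    (e.map_adj_iff.mp (fromRel_inter_nonempty_adj.mpr ⟨hne, h⟩))

end IntersectionGraph

end SimpleGraph

/-- The intersection graph of subtrees (connected induced subgraphs) of a forest is
chordal, i.e. it contains no induced cycle of length at least 4. -/
theorem stmt_8 {V ι : Type*} (F : SimpleGraph V) (hF : F.IsAcyclic)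
    (S : ι → Set V) (hconn : ∀ i, (F.induce (S i)).Connected) :
    ∀ n, 4 ≤ n →
      IsEmpty ((SimpleGraph.cycleGraph n) ↪g
        (SimpleGraph.fromRel fun i j : ι => (S i ∩ S j).Nonempty)) := by
  intro n hn
  refine ⟨fun e => ?_⟩
  have : NeZero n := ⟨by omega⟩
  let T : ℕ → Set V := fun k => S (e k)
  have hT : ∀ k, (F.induce (T k)).Preconnected := fun k => (hconn _).preconnected
  have hsucc := inter_succ_nonempty_of_cycleGraph_embedding e (by omega)
  let B := ⋃ k ≤ n - 3, T (k + 2)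
  have hB : (F.induce B).Preconnected :=
    induce_biUnion_le_preconnected (fun _ _ => hT _) (fun k _ => hsucc (k + 2))
  have h0B : (T 0 ∩ B).Nonempty := by
    obtain ⟨x, hx, hx0⟩ := hsucc (n - 1)
    have hT0 : T (n - 1 + 1) = T 0 := by simp [T, Nat.sub_add_cancel (by omega : 1 ≤ n)]
    refine ⟨x, hT0 ▸ hx0, Set.mem_iUnion₂.mpr ⟨n - 3, le_rfl, ?_⟩⟩
    rwa [show n - 3 + 2 = n - 1 by omega]
  have hB1 : (B ∩ T 1).Nonempty := by
    obtain ⟨x, hx1, hx2⟩ := hsucc 1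
    exact ⟨x, Set.mem_iUnion₂.mpr ⟨0, Nat.zero_le _, hx2⟩, hx1⟩
  obtain ⟨x, ⟨hx0, hxB⟩, hx1⟩ :=
    hF.inter_inter_nonempty (hT 0) hB (hT 1) h0B hB1 (Set.inter_comm _ _ ▸ hsucc 0)
  obtain ⟨_ | k, hk, hxk⟩ := Set.mem_iUnion₂.mp hxB
  · exact Set.disjoint_left.mp
      (disjoint_of_cycleGraph_embedding e le_rfl (by omega) (by omega)) hx0 hxk
  · exact Set.disjoint_left.mp
      (disjoint_of_cycleGraph_embedding e (i := 1) (j := k + 3) (by omega) (by omega) (by omega))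
      hx1 hxk
end

section
/- Let G be a chordal graph whose maximum clique has size at most d. Then the chromatic number of G is at most d. -/
/-!
Dirac's lemma, in the strong form "a clique `K` that misses some vertex misses a simplicial
vertex", goes by induction on the number of vertices. If `G` is not complete, pick `a` adjacent
to all of `K` and a non-neighbour `b ≠ a`; let `C` be the set of vertices reachable from `b`
outside the closed neighbourhood of `a`, and `S` the set of outside neighbours of `C`. Each vertex
of `S` is adjacent to `a`, and two non-adjacent vertices of `S` would close, through a shortest
path across `C` and through `a`, an induced cycle of length at least 4; so `S` is a clique.
Induction on `G[C ∪ S]` with the clique `S` yields a simplicial vertex in `C`; its neighbours lie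
in `C ∪ S`, so it is simplicial in `G`, and it is not in `K`.

A simplicial vertex of a `K_{d+1}`-free graph has fewer than `d` neighbours, so a `d`-colouring
of the rest of the graph extends to it.
-/

namespace SimpleGraph

variable {V : Type*} {G : SimpleGraph V}

def IsChordal (G : SimpleGraph V) : Prop :=
  ∀ n, 4 ≤ n → IsEmpty (cycleGraph n ↪g G)

def IsSimplicial (G : SimpleGraph V) (v : V) : Prop :=
  G.IsClique (G.neighborSet v)

theorem IsChordal.induce (hG : G.IsChordal) (s : Set V) : (G.induce s).IsChordal :=
  fun n hn => ⟨fun e => (hG n hn).false ((Embedding.induce s).comp e)⟩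

lemma cycleGraph_adj_iff_val {n : ℕ} (hn : 2 ≤ n) {i j : Fin n} :
    (cycleGraph n).Adj i j ↔ i.val + 1 = j.val ∨ j.val + 1 = i.val ∨
      i.val = 0 ∧ j.val + 1 = n ∨ j.val = 0 ∧ i.val + 1 = n := by
  have key (k l : Fin n) : (k - l).val = 1 ↔ k.val = l.val + 1 ∨ k.val = 0 ∧ l.val + 1 = n := by
    rcases le_or_gt l k with h | h
    · rw [Fin.sub_val_of_le h]; omega
    · rw [Fin.coe_sub_iff_lt.mpr h]; omega
  rw [cycleGraph_adj', key, key]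
  omega

lemma nonempty_cycleGraph_embedding_of_path {f : ℕ → V} {L : ℕ} {a : V}
    (hinj : ∀ i ≤ L, ∀ j ≤ L, f i = f j → i = j)
    (hadj : ∀ i ≤ L, ∀ j ≤ L, G.Adj (f i) (f j) ↔ i + 1 = j ∨ j + 1 = i)
    (hne : ∀ i ≤ L, f i ≠ a) (hadj_a : ∀ i ≤ L, G.Adj (f i) a ↔ i = 0 ∨ i = L) :
    Nonempty (cycleGraph (L + 2) ↪g G) := by
  let g (i : Fin (L + 2)) : V := if i.val ≤ L then f i else a
  refine ⟨⟨⟨g, fun i j h => ?_⟩, fun {i j} => ?_⟩⟩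
  · simp only [g] at h
    split_ifs at h with hi hj hj
    · exact Fin.ext (hinj i hi j hj h)
    · exact absurd h (hne i hi)
    · exact absurd h.symm (hne j hj)
    · exact Fin.ext (by omega)
  · change G.Adj (g i) (g j) ↔ _
    simp only [g, cycleGraph_adj_iff_val (by omega : 2 ≤ L + 2)]
    split_ifs with hi hj hj
    · rw [hadj i hi j hj]; omega
    · rw [hadj_a i hi]; omega
    · rw [G.adj_comm, hadj_a j hj]; omega
    · simp only [SimpleGraph.irrefl, false_iff]; omega

namespace Walk

variable {u v : V} {p : G.Walk u v}

lemma dist_getVert_of_length_eq_dist (hp : p.length = G.dist u v) {i : ℕ} (hi : i ≤ p.length) :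
    G.dist u (p.getVert i) = i := by
  simpa [hi] using (length_eq_dist_of_subwalk hp (p.isSubwalk_take i)).symm

lemma adj_getVert_iff_of_length_eq_dist (hp : p.length = G.dist u v) {i j : ℕ}
    (hi : i ≤ p.length) (hj : j ≤ p.length) :
    G.Adj (p.getVert i) (p.getVert j) ↔ i + 1 = j ∨ j + 1 = i := by
  refine ⟨fun h => ?_, ?_⟩
  · have hij : i ≠ j := by rintro rfl; exact h.ne rfl
    have := h.diff_dist_adj (u := u)
    rw [dist_getVert_of_length_eq_dist hp hi, dist_getVert_of_length_eq_dist hp hj] at this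
    omega
  · rintro (rfl | rfl)
    · exact p.adj_getVert_succ (by omega)
    · exact (p.adj_getVert_succ (by omega)).symm

end Walk

/-- A shortest `x`–`y` walk in the subgraph induced by `x`, `y` and the non-neighbours of `a` is
an induced path; closing it through `a` gives an induced cycle. -/
theorem IsChordal.adj_of_walk (hG : G.IsChordal) {a x y : V} (hxy : x ≠ y)
    (hax : G.Adj a x) (hay : G.Adj a y) (q : G.Walk x y)
    (hq : ∀ v ∈ q.support, v = x ∨ v = y ∨ v ≠ a ∧ ¬G.Adj a v) : G.Adj x y := by
  by_contra hnxy
  let T : Set V := {v | v = x ∨ v = y ∨ v ≠ a ∧ ¬G.Adj a v}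
  have hr : (G.induce T).Reachable ⟨x, .inl rfl⟩ ⟨y, .inr (.inl rfl)⟩ := ⟨q.induce T hq⟩
  obtain ⟨p, hp⟩ := hr.exists_walk_length_eq_dist
  have hL : 2 ≤ p.length := hp ▸ hr.one_lt_dist_of_ne_of_not_adj (by simpa using hxy) hnxy
  have hinj : ∀ i ≤ p.length, ∀ j ≤ p.length, (p.getVert i).val = (p.getVert j).val → i = j :=
    fun i hi j hj h => (p.isPath_of_length_eq_dist hp).getVert_injOn hi hj (Subtype.ext h)
  have hne (i) (_ : i ≤ p.length) : (p.getVert i).val ≠ a := by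
    rcases (p.getVert i).2 with hx | hy | ⟨hna, -⟩
    · exact hx.trans_ne hax.ne'
    · exact hy.trans_ne hay.ne'
    · exact hna
  have hend (i) (hi : i ≤ p.length) : G.Adj (p.getVert i).val a ↔ i = 0 ∨ i = p.length := by
    refine ⟨fun h => ?_, ?_⟩
    · rcases (p.getVert i).2 with hx | hy | ⟨-, hna⟩
      · exact .inl (hinj i hi 0 (Nat.zero_le _) (by simpa using hx))
      · exact .inr (hinj i hi _ le_rfl (by simpa using hy))
      · exact absurd h.symm hna
    · rintro (rfl | rfl)
      · simpa using hax.symm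
      · simpa using hay.symm
  obtain ⟨e⟩ := nonempty_cycleGraph_embedding_of_path (f := fun i => (p.getVert i).val) hinj
    (fun i hi j hj => Walk.adj_getVert_iff_of_length_eq_dist hp hi hj) hne hend
  exact (hG _ (by omega)).false e

def farComponent (G : SimpleGraph V) (a b : V) : Set V :=
  {v | ∃ p : G.Walk b v, ∀ w ∈ p.support, w ≠ a ∧ ¬G.Adj a w}

def outerBoundary (G : SimpleGraph V) (C : Set V) : Set V :=
  {s | s ∉ C ∧ ∃ c ∈ C, G.Adj c s}

lemma neighborSet_subset_union_outerBoundary {C : Set V} {v : V} (hv : v ∈ C) :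
    G.neighborSet v ⊆ C ∪ G.outerBoundary C := fun w hw => by
  by_cases hwC : w ∈ C
  · exact .inl hwC
  · exact .inr ⟨hwC, v, hv, hw⟩

section farComponent

variable {a b v w : V}

lemma mem_farComponent_self (hba : b ≠ a) (hab : ¬G.Adj a b) : b ∈ G.farComponent a b :=
  ⟨.nil, by simpa using ⟨hba, hab⟩⟩

lemma ne_and_not_adj_of_mem_farComponent (hv : v ∈ G.farComponent a b) :
    v ≠ a ∧ ¬G.Adj a v :=
  let ⟨p, hp⟩ := hv
  hp v p.end_mem_support

lemma mem_farComponent_of_adj (hv : v ∈ G.farComponent a b) (hvw : G.Adj v w)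
    (hw : w ≠ a ∧ ¬G.Adj a w) : w ∈ G.farComponent a b := by
  obtain ⟨p, hp⟩ := hv
  refine ⟨p.concat hvw, fun u hu => ?_⟩
  rw [Walk.support_concat, List.mem_append, List.mem_singleton] at hu
  rcases hu with hu | rfl
  · exact hp u hu
  · exact hw

lemma outerBoundary_farComponent_subset :
    G.outerBoundary (G.farComponent a b) ⊆ G.neighborSet a := by
  rintro s ⟨hs, c, hc, hcs⟩
  by_contra hna
  refine hs (mem_farComponent_of_adj hc hcs ⟨?_, hna⟩)
  rintro rfl
  exact (ne_and_not_adj_of_mem_farComponent hc).2 hcs.symm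

theorem IsChordal.isClique_outerBoundary_farComponent (hG : G.IsChordal) :
    G.IsClique (G.outerBoundary (G.farComponent a b)) := by
  intro x hx y hy hxy
  obtain ⟨-, cx, ⟨px, hpx⟩, hcx⟩ := id hx
  obtain ⟨-, cy, ⟨py, hpy⟩, hcy⟩ := id hy
  refine hG.adj_of_walk hxy (outerBoundary_farComponent_subset hx)
    (outerBoundary_farComponent_subset hy) ((px.reverse.cons hcx.symm).append (py.concat hcy))
    fun u hu => ?_
  simp only [Walk.mem_support_append_iff, Walk.support_cons, Walk.support_reverse,
    Walk.support_concat, List.mem_cons, List.mem_reverse, List.mem_append,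
    List.not_mem_nil, or_false] at hu
  rcases hu with (rfl | hu) | hu | rfl
  · exact .inl rfl
  · exact .inr (.inr (hpx u hu))
  · exact .inr (.inr (hpy u hu))
  · exact .inr (.inl rfl)

end farComponent

lemma IsSimplicial.of_induce {s : Set V} {v : V} (hv : v ∈ s) (hs : G.neighborSet v ⊆ s)
    (h : (G.induce s).IsSimplicial ⟨v, hv⟩) : G.IsSimplicial v :=
  fun x hx y hy hxy => @h ⟨x, hs hx⟩ hx ⟨y, hs hy⟩ hy (Subtype.coe_ne_coe.1 hxy)

lemma IsClique.exists_dominating_vertex_of_ne_top {K : Set V} (hK : G.IsClique K)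
    (hG : G ≠ ⊤) : ∃ a b, b ≠ a ∧ ¬G.Adj a b ∧ ∀ k ∈ K, k = a ∨ G.Adj a k := by
  by_cases h : ∃ k ∈ K, ∃ b, b ≠ k ∧ ¬G.Adj k b
  · obtain ⟨k, hk, b, hbk, hkb⟩ := h
    exact ⟨k, b, hbk, hkb, fun l hl => or_iff_not_imp_left.2 fun hlk => hK hk hl (Ne.symm hlk)⟩
  · push Not at h
    obtain ⟨a, b, hab, hnab⟩ := ne_top_iff_exists_not_adj.1 hG
    refine ⟨a, b, hab.symm, hnab, fun k hk => or_iff_not_imp_left.2 fun hka => ?_⟩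
    exact (h k hk a (Ne.symm hka)).symm

theorem IsChordal.exists_isSimplicial_notMem [Finite V] (hG : G.IsChordal) {K : Set V}
    (hK : G.IsClique K) {v : V} (hv : v ∉ K) : ∃ c ∉ K, G.IsSimplicial c := by
  induction h : Nat.card V using Nat.strong_induction_on generalizing V with
  | _ n ih =>
    rcases eq_or_ne G ⊤ with rfl | hne
    · exact ⟨v, hv, IsClique.top _⟩
    obtain ⟨a, b, hba, hab, hKa⟩ := hK.exists_dominating_vertex_of_ne_top hne
    set C := G.farComponent a b
    set S := G.outerBoundary C
    have hb : b ∈ C := mem_farComponent_self hba hab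
    have haCS : a ∉ C ∪ S := by
      rintro (haC | haS)
      · exact (ne_and_not_adj_of_mem_farComponent haC).1 rfl
      · exact G.irrefl (outerBoundary_farComponent_subset haS)
    have hS : (G.induce (C ∪ S)).IsClique {u | u.val ∈ S} := fun x hx y hy hxy =>
      hG.isClique_outerBoundary_farComponent hx hy (Subtype.val_injective.ne hxy)
    obtain ⟨⟨c, hcCS⟩, hcS, hc⟩ := ih _ (h ▸ Finite.card_subtype_lt haCS) (hG.induce _) hS
      (v := ⟨b, .inl hb⟩) (fun hbS => hbS.1 hb) rfl
    have hcC : c ∈ C := hcCS.resolve_right hcS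
    obtain ⟨hca, hac⟩ := ne_and_not_adj_of_mem_farComponent hcC
    exact ⟨c, fun hcK => (hKa c hcK).elim hca hac,
      hc.of_induce hcCS (neighborSet_subset_union_outerBoundary hcC)⟩

lemma IsSimplicial.degree_lt {v : V} [Fintype (G.neighborSet v)] {d : ℕ}
    (hv : G.IsSimplicial v) (hG : G.CliqueFree (d + 1)) : G.degree v < d := by
  classical
  by_contra! h
  obtain ⟨t, ht, rfl⟩ := Finset.exists_subset_card_eq h
  have htN : ∀ w ∈ t, G.Adj v w := fun w hw => (G.mem_neighborFinset v w).1 (ht hw)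
  exact hG (insert v t) (IsNClique.insert ⟨hv.subset htN, rfl⟩ htN)

lemma colorable_of_degree_lt {v : V} [Fintype (G.neighborSet v)] {d : ℕ}
    (hdeg : G.degree v < d) (h : (G.induce {v}ᶜ).Colorable d) : G.Colorable d := by
  classical
  obtain ⟨C⟩ := h
  let used : Finset (Fin d) := (G.neighborFinset v).attach.image fun w =>
    C ⟨w.1, (G.ne_of_adj ((G.mem_neighborFinset v w.1).1 w.2)).symm⟩
  obtain ⟨c, -, hc⟩ := Finset.exists_mem_notMem_of_card_lt_card (s := used) (t := Finset.univ)
    (by simpa using Finset.card_image_le.trans_lt (by simpa using hdeg))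
  have hfree (w : V) (hvw : G.Adj v w) : C ⟨w, (G.ne_of_adj hvw).symm⟩ ≠ c := fun h =>
    hc (Finset.mem_image.2 ⟨⟨w, (G.mem_neighborFinset v w).2 hvw⟩, Finset.mem_attach _ _, h⟩)
  refine ⟨Coloring.mk (fun w => if hw : w = v then c else C ⟨w, hw⟩) fun {x y} hxy => ?_⟩
  split_ifs with hx hy hy
  · exact absurd (hx.trans hy.symm) hxy.ne
  · subst hx
    exact (hfree y hxy).symm
  · subst hy
    exact hfree x hxy.symm
  · exact C.valid hxy

theorem IsChordal.colorable [Finite V] {d : ℕ} (hG : G.IsChordal) (hcf : G.CliqueFree (d + 1)) :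
    G.Colorable d := by
  induction h : Nat.card V using Nat.strong_induction_on generalizing V with
  | _ n ih =>
    rcases isEmpty_or_nonempty V with _ | ⟨⟨v₀⟩⟩
    · exact .of_isEmpty d
    obtain ⟨v, -, hv⟩ := hG.exists_isSimplicial_notMem isClique_empty (Set.notMem_empty v₀)
    have := Fintype.ofFinite V
    classical
    refine colorable_of_degree_lt (hv.degree_lt hcf) (ih _ ?_ (hG.induce _) ?_ rfl)
    · exact h ▸ Finite.card_subtype_lt (p := (· ∈ ({v}ᶜ : Set V))) (x := v) (by simp)
    · exact hcf.comap (Embedding.induce _).isContained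

end SimpleGraph

/-- A chordal graph (no induced cycle of length ≥ 4) whose maximum clique has size at
most `d` is `d`-colorable, i.e. its chromatic number is at most `d`. -/
theorem stmt_10 {V : Type*} [Fintype V] (G : SimpleGraph V) (d : ℕ)
    (hchordal : ∀ n, 4 ≤ n → IsEmpty ((SimpleGraph.cycleGraph n) ↪g G))
    (hclique : G.CliqueFree (d + 1)) :
    G.Colorable d :=
  SimpleGraph.IsChordal.colorable hchordal hclique
end

section
/- Let H be a hypergraph and F an elimination forest of H. Then the pair (F, bag_F) is a tree decomposition of H, where bag_F(u) consists of u together with all ancestors v of u in F such that v is adjacent (shares a hyperedge) with u or with some descendant of u. That is: (1) every hyperedge e of H is contained in bag_F(u) for some u, and (2) for every vertex v, the set of nodes u with v ∈ bag_F(u) is connected in F. -/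
/-- The bag of `u` induced by an elimination forest: `u` together with all its
ancestors that are adjacent to `u` or to a descendant of `u`. -/
def bagF {V : Type*} (H : SetHypergraph V) (F : RootedForest V) (u : V) : Set V :=
  insert u {v | F.anc v u ∧ ∃ w, F.anc u w ∧ H.adj v w}

/-- Connectivity of a set of nodes inside the forest `F` (viewed as a graph whose
edges join each vertex with its parent). -/
def FConnectedOn {V : Type*} (F : RootedForest V) (S : Set V) : Prop :=
  ∀ a ∈ S, ∀ b ∈ S,
    Relation.ReflTransGen
      (fun x y => x ∈ S ∧ y ∈ S ∧ (F.parent x = some y ∨ F.parent y = some x)) a b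

/-
For a hyperedge `e`, any two of its vertices are comparable in `F`, so the finite set `e` has a
deepest vertex `u`, and every other vertex of `e` is an ancestor of `u` adjacent to `u`; hence
`e ⊆ bagF H F u`. For a vertex `v`, if `v ∈ bagF H F u` with `u ≠ v`, then `v` is an ancestor of
`u` adjacent to some descendant `w` of `u`; every node `x` on the path from `u` up to `v` also has
`w` as a descendant, so `v ∈ bagF H F x`. Thus every node whose bag contains `v` is joined to `v`
inside that set of nodes.
-/

theorem Finset.exists_forall_rel_of_pairwise_comparable {α : Type*} {r : α → α → Prop}
    [Std.Refl r] [IsTrans α r] {s : Finset α} (hs : s.Nonempty)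
    (hcomp : ∀ a ∈ s, ∀ b ∈ s, r a b ∨ r b a) : ∃ u ∈ s, ∀ v ∈ s, r v u := by
  induction hs using Finset.Nonempty.cons_induction with
  | singleton a => exact ⟨a, mem_singleton_self a, fun v hv => mem_singleton.1 hv ▸ refl v⟩
  | cons a s _ _ ih =>
    obtain ⟨u, hu, hmax⟩ := ih fun x hx y hy => hcomp x (mem_cons_of_mem hx) y (mem_cons_of_mem hy)
    rcases hcomp a (mem_cons_self a s) u (mem_cons_of_mem hu) with hau | hua
    · refine ⟨u, mem_cons_of_mem hu, fun v hv => ?_⟩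
      rcases mem_cons.1 hv with rfl | hv
      exacts [hau, hmax v hv]
    · refine ⟨a, mem_cons_self a s, fun v hv => ?_⟩
      rcases mem_cons.1 hv with rfl | hv
      exacts [refl v, _root_.trans (hmax v hv) hua]

namespace RootedForest

variable {V : Type*} (F : RootedForest V)

theorem anc_refl (a : V) : F.anc a a := Relation.ReflTransGen.refl

theorem anc_trans {a b c : V} (hab : F.anc a b) (hbc : F.anc b c) : F.anc a c :=
  Relation.ReflTransGen.trans hbc hab

instance : Std.Refl F.anc := ⟨F.anc_refl⟩

instance : IsTrans V F.anc := ⟨fun _ _ _ => F.anc_trans⟩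

def AdjWithin (S : Set V) (x y : V) : Prop :=
  x ∈ S ∧ y ∈ S ∧ (F.parent x = some y ∨ F.parent y = some x)

instance (S : Set V) : Std.Symm (F.AdjWithin S) := ⟨fun _ _ ⟨hx, hy, h⟩ => ⟨hy, hx, h.symm⟩⟩

end RootedForest

section EliminationForest

variable {V : Type*} {H : SetHypergraph V} {F : RootedForest V}

theorem IsEliminationForest.exists_forall_anc_of_mem_edge [Finite V]
    (hEF : IsEliminationForest H F) {e : Set V} (he : e ∈ H.E) :
    ∃ u ∈ e, ∀ v ∈ e, F.anc v u := by
  have := Fintype.ofFinite V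
  classical
  have hcomp : ∀ a ∈ e.toFinset, ∀ b ∈ e.toFinset, F.anc a b ∨ F.anc b a := by
    intro a ha b hb
    rw [Set.mem_toFinset] at ha hb
    by_cases hab : a = b
    · exact .inl (hab ▸ F.anc_refl a)
    · exact hEF a b ⟨hab, e, he, ha, hb⟩
  simpa using Finset.exists_forall_rel_of_pairwise_comparable
    (Set.toFinset_nonempty.2 (H.edge_nonempty e he)) hcomp

theorem IsEliminationForest.exists_subset_bagF [Finite V] (hEF : IsEliminationForest H F)
    {e : Set V} (he : e ∈ H.E) : ∃ u, e ⊆ bagF H F u := by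
  obtain ⟨u, hu, hdeepest⟩ := hEF.exists_forall_anc_of_mem_edge he
  refine ⟨u, fun v hv => ?_⟩
  by_cases hvu : v = u
  · exact hvu ▸ Set.mem_insert v _
  · exact Set.mem_insert_of_mem _ ⟨hdeepest v hv, u, F.anc_refl u, hvu, e, he, hv, hu⟩

theorem mem_bagF_of_anc_of_adj {v x w : V} (hvx : F.anc v x) (hxw : F.anc x w)
    (hvw : H.adj v w) : v ∈ bagF H F x := by
  by_cases hxv : x = v
  · exact hxv ▸ Set.mem_insert x _
  · exact Set.mem_insert_of_mem _ ⟨hvx, w, hxw, hvw⟩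

theorem FConnectedOn.of_forall_reflTransGen {S : Set V} {v : V}
    (hreach : ∀ u ∈ S, Relation.ReflTransGen (F.AdjWithin S) u v) : FConnectedOn F S :=
  fun a ha b hb => (hreach a ha).trans (Std.Symm.symm _ _ (hreach b hb))

theorem reflTransGen_adjWithin_of_mem_bagF {v u : V} (hu : v ∈ bagF H F u) :
    Relation.ReflTransGen (F.AdjWithin {z | v ∈ bagF H F z}) u v := by
  rcases hu with rfl | ⟨hvu, w, huw, hvw⟩
  · exact .refl
  · induction hvu using Relation.ReflTransGen.head_induction_on with
    | refl => exact .refl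
    | @head x y hxy hvy ih =>
      have hyw : F.anc y w := F.anc_trans (.single hxy) huw
      exact .head ⟨mem_bagF_of_anc_of_adj (hvy.head hxy) huw hvw,
        mem_bagF_of_anc_of_adj hvy hyw hvw, .inl hxy⟩ (ih hyw)

end EliminationForest

/-- An elimination forest induces a tree decomposition: (1) every hyperedge is
contained in some bag, and (2) for every vertex `v`, the set of nodes whose bags
contain `v` is connected in the forest. -/
theorem stmt_17 {V : Type*} [Fintype V] (H : SetHypergraph V) (F : RootedForest V)
    (hEF : IsEliminationForest H F) :
    (∀ e ∈ H.E, ∃ u : V, e ⊆ bagF H F u) ∧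
    (∀ v : V, FConnectedOn F {u | v ∈ bagF H F u}) :=
  ⟨fun _ he => hEF.exists_subset_bagF he,
    fun _ => FConnectedOn.of_forall_reflTransGen fun _ hu => reflTransGen_adjWithin_of_mem_bagF hu⟩
end
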